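/- arXiv:1009.2438 — 2 statements merged into one kernel-verified Lean document; each statement's English description precedes it below -/
import Mathlib

section
/- Let H be a complex Hilbert space and I ⊆ L(H) a distributive ideal. Then f(g(I)) = I, where g(I) is the set of rays contained in some member of I and f(S) = {K : every ray in K lies in S}. In particular every distributive ideal of L(H) is determined by its rays. -/
variable {H : Type*} [NormedAddCommGroup H] [InnerProductSpace ℂ H]

/-- The ray space: the set of one-dimensional subspaces (rays) of `H`. -/
def RaySp (H : Type*) [NormedAddCommGroup H] [InnerProductSpace ℂ H] :
    Set (Submodule ℂ H) :=
  {r | ∃ ψ : H, ψ ≠ 0 ∧ r = (ℂ ∙ ψ)}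

/-- The set of rays contained in a subspace `K`. -/
def rset (K : Submodule ℂ H) : Set (Submodule ℂ H) :=
  {r | ∃ ψ : H, ψ ≠ 0 ∧ ψ ∈ K ∧ r = (ℂ ∙ ψ)}

/-- The orthogonal pseudo-negation on sets of rays. -/
def pneg (S : Set (Submodule ℂ H)) : Set (Submodule ℂ H) :=
  {r | ∃ ψ : H, ψ ≠ 0 ∧ r = (ℂ ∙ ψ) ∧
    ∀ φ : H, φ ≠ 0 → (ℂ ∙ φ) ∈ S → (inner ℂ ψ φ : ℂ) = 0}

/-- `fset S` = the set of closed subspaces all of whose rays lie in `S`. -/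
def fset (S : Set (Submodule ℂ H)) : Set (Submodule ℂ H) :=
  {K | IsClosed (K : Set H) ∧ ∀ ψ : H, ψ ∈ K → ψ ≠ 0 → (ℂ ∙ ψ) ∈ S}

/-- `gset I` = the set of rays contained in some member of `I`. -/
def gset (I : Set (Submodule ℂ H)) : Set (Submodule ℂ H) :=
  {r | ∃ K ∈ I, ∃ ψ : H, ψ ≠ 0 ∧ ψ ∈ K ∧ r = (ℂ ∙ ψ)}

/-- A distributive ideal of the lattice of closed subspaces of `H`: a nonempty,
downward-closed set of closed subspaces, closed under joins that distribute over
all meets (joins of closed subspaces being closures of algebraic suprema). -/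
def IsDistIdeal (I : Set (Submodule ℂ H)) : Prop :=
  (∀ K ∈ I, IsClosed (K : Set H)) ∧ I.Nonempty ∧
  (∀ K ∈ I, ∀ K' : Submodule ℂ H, IsClosed (K' : Set H) → K' ≤ K → K' ∈ I) ∧
  (∀ 𝒦 ⊆ I, (∀ K' : Submodule ℂ H, IsClosed (K' : Set H) →
      (sSup 𝒦).topologicalClosure ⊓ K' = (⨆ K ∈ 𝒦, K ⊓ K').topologicalClosure) →
    (sSup 𝒦).topologicalClosure ∈ I)

open Classical in
/-- The weakly-Heyting implication on sets of rays, defined via atoms (singleton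
ray sets) and double pseudo-negation. -/
noncomputable def himp' (S₁ S₂ : Set (Submodule ℂ H)) : Set (Submodule ℂ H) :=
  if S₁ = ∅ then RaySp H
  else ⋂ r ∈ S₁, pneg (pneg (pneg {r} ∪ ({r} ∩ S₂)))

/-! The proof idea: a closed subspace `K` is the join of its rays, and this join distributes
over every meet, since `K ⊓ K'` is in turn the join of the rays of `K` lying in `K'`.
If every ray of `K` lies in a member of `I`, then by downward closure every ray of `K`
belongs to `I`, and closure of `I` under distributive joins puts `K` in `I`. -/

theorem le_of_mem_rset {K r : Submodule ℂ H} (hr : r ∈ rset K) : r ≤ K := by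
  obtain ⟨ψ, -, hψ, rfl⟩ := hr
  exact (Submodule.span_singleton_le_iff_mem ψ K).mpr hψ

theorem sSup_rset (K : Submodule ℂ H) : sSup (rset K) = K := by
  refine le_antisymm (sSup_le fun r hr => le_of_mem_rset hr) fun ψ hψ => ?_
  rcases eq_or_ne ψ 0 with rfl | hψ0
  · exact zero_mem _
  · exact le_sSup (show (ℂ ∙ ψ) ∈ rset K from ⟨ψ, hψ0, hψ, rfl⟩)
      (Submodule.mem_span_singleton_self ψ)

theorem rset_mono {K K' : Submodule ℂ H} (h : K ≤ K') : rset K ⊆ rset K' := by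
  rintro r ⟨ψ, hψ0, hψ, rfl⟩
  exact ⟨ψ, hψ0, h hψ, rfl⟩

theorem iSup_rset_inf (K K' : Submodule ℂ H) : ⨆ r ∈ rset K, r ⊓ K' = K ⊓ K' := by
  refine le_antisymm (iSup₂_le fun r hr => inf_le_inf_right K' (le_of_mem_rset hr)) ?_
  conv_lhs => rw [← sSup_rset (K ⊓ K')]
  refine sSup_le fun r hr => le_iSup₂_of_le r (rset_mono inf_le_left hr) ?_
  exact le_inf le_rfl ((le_of_mem_rset hr).trans inf_le_right)

theorem isClosed_of_mem_rset {K r : Submodule ℂ H} (hr : r ∈ rset K) : IsClosed (r : Set H) := by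
  obtain ⟨ψ, -, -, rfl⟩ := hr
  exact Submodule.closed_of_finiteDimensional _

namespace IsDistIdeal

variable {I : Set (Submodule ℂ H)}

theorem subset_fset_gset (hI : IsDistIdeal I) : I ⊆ fset (gset I) :=
  fun K hK => ⟨hI.1 K hK, fun ψ hψ hψ0 => ⟨K, hK, ψ, hψ0, hψ, rfl⟩⟩

theorem rset_subset (hI : IsDistIdeal I) {K : Submodule ℂ H} (hK : K ∈ fset (gset I)) :
    rset K ⊆ I := by
  rintro _ ⟨ψ, hψ0, hψ, rfl⟩
  obtain ⟨K', hK', φ, -, hφ, hr⟩ := hK.2 ψ hψ hψ0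
  refine hI.2.2.1 K' hK' _ (isClosed_of_mem_rset ⟨ψ, hψ0, hψ, rfl⟩) ?_
  rw [hr]
  exact (Submodule.span_singleton_le_iff_mem φ K').mpr hφ

theorem mem_of_isClosed_of_rset_subset (hI : IsDistIdeal I) {K : Submodule ℂ H}
    (hK : IsClosed (K : Set H)) (hKI : rset K ⊆ I) : K ∈ I := by
  have hclosure : (sSup (rset K)).topologicalClosure = K := by
    rw [sSup_rset, hK.submodule_topologicalClosure_eq]
  rw [← hclosure]
  refine hI.2.2.2 (rset K) hKI fun K' hK' => ?_
  rw [hclosure, iSup_rset_inf, (hK.inter hK').submodule_topologicalClosure_eq]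

end IsDistIdeal

theorem fset_gset_general
    (I : Set (Submodule ℂ H)) (hI : IsDistIdeal I) :
    fset (gset I) = I := by
  refine Set.Subset.antisymm (fun K hK => ?_) hI.subset_fset_gset
  exact hI.mem_of_isClosed_of_rset_subset hK.1 (hI.rset_subset hK)

/-- Every distributive ideal of the lattice of closed subspaces is determined by
its rays: `fset (gset I) = I`. -/
theorem fset_gset [CompleteSpace H]
    (I : Set (Submodule ℂ H)) (hI : IsDistIdeal I) :
    fset (gset I) = I :=
  fset_gset_general I hI
end

section
/- With the implication defined via atoms and double pseudo-negation on 𝒫(R(H)), for all S₁, S₂, S₃ ⊆ R(H): (S₁ → S₂) ∩ (S₂ → S₃) ⊆ S₁ → S₃ (transitivity axiom of a weakly Heyting algebra). -/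
/-! Orthogonality of nonzero vectors is a symmetric, irreflexive relation on rays, so `pneg` is
the polar map of a polarity: `∼∼∼S = ∼S` and `∼(∼S ∪ S) = ∅`. Hence the term attached to an
atom `r ∈ S₁` in `S₁ → S₂` is all of `R(H)` when `r ∈ S₂` and `∼{r}` otherwise, i.e. `S₁ → S₂`
is the set of rays orthogonal to every `r ∈ S₁ \ S₂`. Transitivity then follows from
`S₁ \ S₃ ⊆ (S₁ \ S₂) ∪ (S₂ \ S₃)`. -/

variable {H : Type*} [NormedAddCommGroup H] [InnerProductSpace ℂ H]

lemma pneg_subset_raySp (S : Set (Submodule ℂ H)) : pneg S ⊆ RaySp H := by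
  rintro _ ⟨ψ, hψ, rfl, -⟩
  exact ⟨ψ, hψ, rfl⟩

lemma pneg_anti {S T : Set (Submodule ℂ H)} (hST : S ⊆ T) : pneg T ⊆ pneg S := by
  rintro _ ⟨ψ, hψ, rfl, hT⟩
  exact ⟨ψ, hψ, rfl, fun φ hφ hφS => hT φ hφ (hST hφS)⟩

lemma pneg_empty : pneg (∅ : Set (Submodule ℂ H)) = RaySp H := by
  refine (pneg_subset_raySp _).antisymm ?_
  rintro _ ⟨ψ, hψ, rfl⟩
  exact ⟨ψ, hψ, rfl, fun _ _ h => h.elim⟩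

lemma mem_pneg_iff {S : Set (Submodule ℂ H)} {ψ : H} (hψ : ψ ≠ 0) :
    (ℂ ∙ ψ) ∈ pneg S ↔ ∀ φ : H, φ ≠ 0 → (ℂ ∙ φ) ∈ S → (inner ℂ ψ φ : ℂ) = 0 := by
  refine ⟨?_, fun h => ⟨ψ, hψ, rfl, h⟩⟩
  rintro ⟨ψ', -, hspan, h⟩ φ hφ hφS
  obtain ⟨c, rfl⟩ := Submodule.mem_span_singleton.mp (hspan ▸ Submodule.mem_span_singleton_self ψ)
  rw [inner_smul_left, h φ hφ hφS, mul_zero]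

lemma disjoint_pneg_self (S : Set (Submodule ℂ H)) : Disjoint (pneg S) S := by
  rw [Set.disjoint_left]
  rintro _ ⟨ψ, hψ, rfl, h⟩ hψS
  exact hψ (inner_self_eq_zero.mp (h ψ hψ hψS))

lemma inter_raySp_subset_pneg_pneg (S : Set (Submodule ℂ H)) :
    S ∩ RaySp H ⊆ pneg (pneg S) := by
  rintro _ ⟨hφS, φ, hφ, rfl⟩
  exact ⟨φ, hφ, rfl, fun χ hχ hχS => inner_eq_zero_symm.mp ((mem_pneg_iff hχ).mp hχS φ hφ hφS)⟩

lemma pneg_pneg_pneg (S : Set (Submodule ℂ H)) : pneg (pneg (pneg S)) = pneg S := by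
  refine subset_antisymm ?_ fun r hr =>
    inter_raySp_subset_pneg_pneg _ ⟨hr, pneg_subset_raySp _ hr⟩
  rintro _ ⟨ψ, hψ, rfl, h⟩
  exact ⟨ψ, hψ, rfl, fun φ hφ hφS =>
    h φ hφ (inter_raySp_subset_pneg_pneg _ ⟨hφS, φ, hφ, rfl⟩)⟩

lemma pneg_pneg_union_self (S : Set (Submodule ℂ H)) : pneg (pneg S ∪ S) = ∅ := by
  refine Set.eq_empty_of_forall_notMem fun r hr => ?_
  have hrS : r ∈ pneg S := pneg_anti Set.subset_union_right hr
  exact Set.disjoint_left.mp (disjoint_pneg_self _) hr (Or.inl hrS)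

lemma pneg_pneg_atom_of_mem {r : Submodule ℂ H} {S : Set (Submodule ℂ H)} (hr : r ∈ S) :
    pneg (pneg (pneg {r} ∪ ({r} ∩ S))) = RaySp H := by
  rw [Set.inter_eq_left.mpr (Set.singleton_subset_iff.mpr hr), pneg_pneg_union_self, pneg_empty]

lemma pneg_pneg_atom_of_notMem {r : Submodule ℂ H} {S : Set (Submodule ℂ H)} (hr : r ∉ S) :
    pneg (pneg (pneg {r} ∪ ({r} ∩ S))) = pneg {r} := by
  rw [Set.singleton_inter_eq_empty.mpr hr, Set.union_empty, pneg_pneg_pneg]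

lemma himp'_eq (S₁ S₂ : Set (Submodule ℂ H)) :
    himp' S₁ S₂ = RaySp H ∩ ⋂ r ∈ S₁ \ S₂, pneg {r} := by
  rw [himp']
  split_ifs with hS₁
  · simp [hS₁]
  obtain ⟨r₀, hr₀⟩ := Set.nonempty_iff_ne_empty.mpr hS₁
  ext x
  simp only [Set.mem_inter_iff, Set.mem_iInter₂, Set.mem_sdiff, and_imp]
  constructor
  · intro hx
    refine ⟨pneg_subset_raySp _ (hx r₀ hr₀), fun r hr₁ hr₂ => ?_⟩
    simpa only [pneg_pneg_atom_of_notMem hr₂] using hx r hr₁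
  · rintro ⟨hxRay, hx⟩ r hr₁
    by_cases hr₂ : r ∈ S₂
    · rwa [pneg_pneg_atom_of_mem hr₂]
    · rw [pneg_pneg_atom_of_notMem hr₂]
      exact hx r hr₁ hr₂

theorem himp_trans_general
    (S₁ S₂ S₃ : Set (Submodule ℂ H)) :
    himp' S₁ S₂ ∩ himp' S₂ S₃ ⊆ himp' S₁ S₃ := by
  simp only [himp'_eq]
  rintro x ⟨⟨hxRay, h₁₂⟩, -, h₂₃⟩
  refine ⟨hxRay, Set.mem_iInter₂.mpr fun r ⟨hr₁, hr₃⟩ => ?_⟩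
  by_cases hr₂ : r ∈ S₂
  · exact Set.mem_iInter₂.mp h₂₃ r ⟨hr₂, hr₃⟩
  · exact Set.mem_iInter₂.mp h₁₂ r ⟨hr₁, hr₂⟩

/-- Transitivity axiom of a weakly Heyting algebra:
`(S₁ → S₂) ∩ (S₂ → S₃) ⊆ S₁ → S₃`. -/
theorem himp_trans [CompleteSpace H]
    (S₁ S₂ S₃ : Set (Submodule ℂ H))
    (h₁ : S₁ ⊆ RaySp H) (h₂ : S₂ ⊆ RaySp H) (h₃ : S₃ ⊆ RaySp H) :
    himp' S₁ S₂ ∩ himp' S₂ S₃ ⊆ himp' S₁ S₃ :=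
  himp_trans_general S₁ S₂ S₃
end
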